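/- Let (R,m) be a noetherian local ring and M a nonzero finitely generated R-module of grade g whose minimal free resolution is self-dual. Then (Ω^i_R M)* ≅ Ω^{g+1−i}_R M for all integers 0 ≤ i ≤ g−1, where Ω^n_R M denotes the n-th syzygy in the minimal free resolution and (−)* = Hom_R(−,R). -/

import Mathlib

open CategoryTheory IsLocalRing

noncomputable def ExtMod (R : Type) [CommRing R] (M N : Type) [AddCommGroup M] [Module R M]
    [AddCommGroup N] [Module R N] (i : ℕ) : ModuleCat R :=
  ((Ext R (ModuleCat.{0} R) i).obj (Opposite.op (ModuleCat.of R M))).obj (ModuleCat.of R N)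

noncomputable def mgrade (R : Type) [CommRing R] (M : Type) [AddCommGroup M] [Module R M] : ℕ :=
  sInf {i | Nontrivial (ExtMod R M R i)}

def IsTotallySelfDual (R : Type) [CommRing R] (M : Type) [AddCommGroup M] [Module R M] : Prop :=
  Nontrivial M ∧ Nonempty (ExtMod R M R (mgrade R M) ≃ₗ[R] M) ∧
    ∀ i, i ≠ mgrade R M → Subsingleton (ExtMod R M R i)

/-- A minimal free resolution of `M` over a local ring `R`: a resolution by finite free
modules all of whose differentials (and the augmentation) have image inside `𝔪`-times
the target (resp. have kernel inside `𝔪 F₀`). -/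
structure MinFreeRes (R : Type) [CommRing R] [IsLocalRing R]
    (M : Type) [AddCommGroup M] [Module R M] where
  F : ℕ → ModuleCat.{0} R
  free : ∀ n, Module.Free R (F n)
  fin : ∀ n, Module.Finite R (F n)
  d : ∀ n, F (n + 1) →ₗ[R] F n
  aug : F 0 →ₗ[R] M
  aug_surj : Function.Surjective aug
  exact_aug : LinearMap.ker aug = LinearMap.range (d 0)
  exact : ∀ n, LinearMap.ker (d n) = LinearMap.range (d (n + 1))
  minimal : ∀ n, LinearMap.range (d n) ≤ (maximalIdeal R) • (⊤ : Submodule R (F n))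

namespace MinFreeRes

variable {R : Type} [CommRing R] [IsLocalRing R]
  {M : Type} [AddCommGroup M] [Module R M]

/-- The `n`-th syzygy of `M` with respect to a minimal free resolution:
`Ω⁰ M = M` and `Ωⁿ⁺¹ M = Im(dₙ) = Ker(dₙ₋₁)`. -/
noncomputable def Syz (C : MinFreeRes R M) : ℕ → ModuleCat.{0} R
  | 0 => ModuleCat.of R M
  | n + 1 => ModuleCat.of R (LinearMap.range (C.d n))

/-- A minimal free resolution is self-dual if it is bounded, of length `r`, and is
isomorphic (as a complex) to its `R`-dual complex with reversed indexing. -/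
def SelfDual (C : MinFreeRes R M) : Prop :=
  ∃ r : ℕ, (∀ n, r < n → Subsingleton (C.F n)) ∧ Nontrivial (C.F r) ∧
    ∃ e : ∀ ⦃m n : ℕ⦄, m + n = r → (C.F n ≃ₗ[R] Module.Dual R (C.F m)),
      ∀ (q n : ℕ) (hp : (q + 1) + n = r) (hq : q + (n + 1) = r),
        (e hp).toLinearMap ∘ₗ C.d n = (C.d q).dualMap ∘ₗ (e hq).toLinearMap

/-- A minimal free resolution is eventually periodic with period `a` if
`Ωⁿ M ≅ Ωⁿ⁺ᵃ M` for some `n`. -/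
def EventuallyPeriodic (C : MinFreeRes R M) (a : ℕ) : Prop :=
  0 < a ∧ ∃ n : ℕ, Nonempty (C.Syz n ≃ₗ[R] C.Syz (n + a))

end MinFreeRes

/-- Stable isomorphism: `X ⊕ P ≅ Y ⊕ Q` for some finite free `P`, `Q`. -/
def StablyIso (R : Type) [CommRing R] (X Y : Type) [AddCommGroup X] [Module R X]
    [AddCommGroup Y] [Module R Y] : Prop :=
  ∃ (P Q : ModuleCat.{0} R), Module.Free R P ∧ Module.Finite R P ∧
    Module.Free R Q ∧ Module.Finite R Q ∧ Nonempty ((X × P) ≃ₗ[R] (Y × Q))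

section Helpers
open Limits

variable {R : Type} [CommRing R]

lemma subsingleton_of_isZero {X : ModuleCat.{0} R} (h : IsZero X) : Subsingleton X := by
  have h0 : ModuleCat.Hom.hom (𝟙 X) = (0 : X →ₗ[R] X) := by rw [h.eq_of_src (𝟙 X) 0]; rfl
  refine ⟨fun a b => ?_⟩
  have ha := LinearMap.congr_fun h0 a
  have hb := LinearMap.congr_fun h0 b
  simp only [LinearMap.zero_apply] at ha hb
  have ha' : a = 0 := by rw [← ha]; rfl
  have hb' : b = 0 := by rw [← hb]; rfl
  rw [ha', hb']

lemma exists_dual_equiv {A B N : Type} [AddCommGroup A] [Module R A] [AddCommGroup B]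
    [Module R B] [AddCommGroup N] [Module R N] (f : B →ₗ[R] A) (p : A →ₗ[R] N)
    (hp : Function.Surjective p) (hker : LinearMap.ker p = LinearMap.range f) :
    Nonempty (Module.Dual R N ≃ₗ[R] LinearMap.ker f.dualMap) := by
  have hinj : Function.Injective (p.dualMap : Module.Dual R N →ₗ[R] Module.Dual R A) := by
    rw [← LinearMap.ker_eq_bot]
    ext ψ
    simp only [LinearMap.mem_ker, Submodule.mem_bot]
    constructor
    · intro hψ
      ext n
      obtain ⟨x, rfl⟩ := hp n
      exact LinearMap.congr_fun hψ x
    · rintro rfl; simp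
  have hmem : ∀ ψ : Module.Dual R N, p.dualMap ψ ∈ LinearMap.ker f.dualMap := by
    intro ψ
    rw [LinearMap.mem_ker]
    ext b
    have : f b ∈ LinearMap.ker p := by rw [hker]; exact ⟨b, rfl⟩
    simp only [LinearMap.dualMap_apply, LinearMap.zero_apply]
    rw [LinearMap.mem_ker] at this
    simp [this]
  refine ⟨LinearEquiv.ofBijective ((p.dualMap).codRestrict _ hmem) ⟨?_, ?_⟩⟩
  · intro x y hxy
    apply hinj
    exact congrArg Subtype.val hxy
  · rintro ⟨φ, hφ⟩
    rw [LinearMap.mem_ker] at hφ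
    have hle : LinearMap.ker p ≤ LinearMap.ker φ := by
      rw [hker]
      rintro x ⟨b, rfl⟩
      exact LinearMap.congr_fun hφ b
    refine ⟨(Submodule.liftQ _ φ hle) ∘ₗ (p.quotKerEquivOfSurjective hp).symm.toLinearMap, ?_⟩
    ext x
    show ((Submodule.liftQ _ φ hle) ((p.quotKerEquivOfSurjective hp).symm (p x)) : R) = φ x
    have hmk : (p.quotKerEquivOfSurjective hp).symm (p x) = Submodule.Quotient.mk x := by
      rw [LinearEquiv.symm_apply_eq]
      rfl
    rw [hmk, Submodule.liftQ_apply]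

lemma ker_equiv_of_square {A A' B B' : Type} [AddCommGroup A] [Module R A] [AddCommGroup A']
    [Module R A'] [AddCommGroup B] [Module R B] [AddCommGroup B'] [Module R B']
    (u : A ≃ₗ[R] A') (v : B ≃ₗ[R] B') (a : A →ₗ[R] B) (b : A' →ₗ[R] B')
    (h : v.toLinearMap ∘ₗ a = b ∘ₗ u.toLinearMap) :
    Nonempty ((LinearMap.ker b : Submodule R A') ≃ₗ[R] (LinearMap.ker a : Submodule R A)) := by
  have hmap : Submodule.map (u : A →ₗ[R] A') (LinearMap.ker a) = LinearMap.ker b := by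
    ext φ
    simp only [Submodule.mem_map, LinearMap.mem_ker]
    constructor
    · rintro ⟨x, hx, rfl⟩
      have := LinearMap.congr_fun h x
      simp only [LinearMap.coe_comp, Function.comp_apply, LinearEquiv.coe_coe] at this
      rw [hx, map_zero] at this
      exact this.symm
    · intro hφ
      refine ⟨u.symm φ, ?_, by simp⟩
      have := LinearMap.congr_fun h (u.symm φ)
      simp only [LinearMap.coe_comp, Function.comp_apply, LinearEquiv.coe_coe,
        LinearEquiv.apply_symm_apply] at this
      apply v.injective
      rw [map_zero]
      exact this.trans hφ
  exact ⟨(LinearEquiv.ofEq _ _ hmap).symm.trans (u.submoduleMap (LinearMap.ker a)).symm⟩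

end Helpers

namespace MinFreeRes

variable {R : Type} [CommRing R] [IsLocalRing R]
  {M : Type} [AddCommGroup M] [Module R M] (C : MinFreeRes R M)

lemma d_comp_d (n : ℕ) : (C.d n).comp (C.d (n+1)) = 0 := by
  ext x
  have h : C.d (n+1) x ∈ LinearMap.ker (C.d n) := by
    rw [C.exact n]; exact ⟨x, rfl⟩
  simpa using h

noncomputable def cx : ChainComplex (ModuleCat.{0} R) ℕ :=
  ChainComplex.of C.F (fun n => ModuleCat.ofHom (C.d n))
    (fun n => by ext x; exact LinearMap.congr_fun (C.d_comp_d n) x)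

lemma cx_X (n : ℕ) : C.cx.X n = C.F n := rfl

lemma cx_d (n : ℕ) : (C.cx.d (n+1) n).hom = C.d n :=
  congrArg ModuleCat.Hom.hom (ChainComplex.of_d C.F (fun n => ModuleCat.ofHom (C.d n)) n)

noncomputable def pi0 : C.cx ⟶ (ChainComplex.single₀ (ModuleCat.{0} R)).obj (ModuleCat.of R M) :=
  (ChainComplex.toSingle₀Equiv _ _).symm ⟨ModuleCat.ofHom C.aug, by
    ext x
    have h : C.d 0 x ∈ LinearMap.ker C.aug := by
      rw [C.exact_aug]; exact ⟨x, rfl⟩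
    exact h⟩

lemma pi0_f_zero : C.pi0.f 0 = ModuleCat.ofHom C.aug :=
  ChainComplex.toSingle₀Equiv_symm_apply_f_zero _ _

noncomputable def projRes : ProjectiveResolution (ModuleCat.of R M) where
  complex := C.cx
  projective n := by
    haveI := C.free n
    have : Module.Projective R (C.F n) := inferInstance
    exact (IsProjective.iff_projective (C.F n)).mp this
  π := C.pi0
  quasiIso := ⟨fun n => by
    cases n with
    | zero =>
      rw [ChainComplex.quasiIsoAt₀_iff, ShortComplex.quasiIso_iff_of_zeros']
      rotate_left
      · rfl
      · rfl
      · rfl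
      constructor
      · rw [ShortComplex.moduleCat_exact_iff]
        intro (x : C.F 0) hx
        have hx' : C.pi0.f 0 x = 0 := hx
        rw [C.pi0_f_zero] at hx'
        replace hx' : C.aug x = 0 := hx' 
        have : x ∈ LinearMap.range (C.d 0) := by rw [← C.exact_aug]; exact hx'
        obtain ⟨y, hy⟩ := this
        exact ⟨y, by rw [← hy]; exact congrFun (congrArg _ (C.cx_d 0)) y⟩
      · rw [ModuleCat.epi_iff_surjective]
        intro m
        obtain ⟨x, hx⟩ := C.aug_surj m
        refine ⟨x, ?_⟩
        show C.pi0.f 0 x = m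
        rw [C.pi0_f_zero]
        exact hx
    | succ n =>
      rw [quasiIsoAt_iff_exactAt']
      · rw [HomologicalComplex.exactAt_iff' _ (n+2) (n+1) n (by simp) (by simp),
          ShortComplex.moduleCat_exact_iff]
        intro (x : C.F (n+1)) hx
        have hx' : C.d n x = 0 := by rw [← C.cx_d n]; exact hx
        have : x ∈ LinearMap.range (C.d (n+1)) := by rw [← C.exact n]; exact hx'
        obtain ⟨y, hy⟩ := this
        exact ⟨y, by rw [← hy]; exact congrFun (congrArg _ (C.cx_d (n+1))) y⟩
      · apply ChainComplex.exactAt_succ_single_obj⟩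

end MinFreeRes

namespace MinFreeRes

variable {R : Type} [CommRing R] [IsLocalRing R]
  {M : Type} [AddCommGroup M] [Module R M] (C : MinFreeRes R M)

/-- The dual cochain complex `Hom(F_•, R)`. -/
noncomputable def Kc : CochainComplex (ModuleCat.{0} R) ℕ :=
  CochainComplex.of (fun n => ModuleCat.of R (Module.Dual R (C.F n)))
    (fun n => ModuleCat.ofHom (C.d n).dualMap) (fun n => by
      ext φ x
      have h := LinearMap.congr_fun (C.d_comp_d n) x
      simp at h
      simp [h])

lemma Kc_d (n : ℕ) (φ : C.F n →ₗ[R] R) :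
    C.Kc.d n (n+1) φ = (C.d n).dualMap φ := by
  exact congrArg (fun f : C.Kc.X n ⟶ C.Kc.X (n+1) => f φ) (CochainComplex.of_d
    (fun n => ModuleCat.of R (Module.Dual R (C.F n))) (fun n => ModuleCat.ofHom (C.d n).dualMap) n)

noncomputable def KcIso : C.cx.linearYonedaObj R (ModuleCat.of R R) ≅ C.Kc :=
  HomologicalComplex.Hom.isoOfComponents
    (fun n => LinearEquiv.toModuleIso (ModuleCat.homLinearEquiv (S := R)))
    (by
      rintro i j rfl
      ext φ
      refine LinearMap.ext fun x => ?_
      have e := LinearMap.congr_fun (C.cx_d i) x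
      have e2 := C.Kc_d i (ModuleCat.Hom.hom φ)
      change (show Module.Dual R (C.F (i+1)) from (C.Kc.d i (i+1)) (ModuleCat.Hom.hom φ)) x =
        ModuleCat.Hom.hom φ ((C.cx.d (i+1) i).hom x)
      rw [e2, e]
      rfl)

lemma Kc_X_subsingleton {n : ℕ} (h : Subsingleton (C.F n)) :
    Subsingleton (C.Kc.X n) := by
  have key : ∀ χ : C.F n →ₗ[R] R, χ = 0 := by
    intro χ
    ext x
    rw [Subsingleton.elim x (0 : C.F n)]
    simp
  exact ⟨fun φ ψ => (key φ).trans (key ψ).symm⟩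

theorem mgrade_eq_of_selfdual [Nontrivial M] (r : ℕ)
    (hvan : ∀ n, r < n → Subsingleton (C.F n))
    (hFr : Nontrivial (C.F r))
    (e : ∀ ⦃m n : ℕ⦄, m + n = r → ((C.F n) ≃ₗ[R] Module.Dual R (C.F m)))
    (hsq : ∀ (q n : ℕ) (hp : (q + 1) + n = r) (hq : q + (n + 1) = r),
        (e hp).toLinearMap ∘ₗ C.d n = (C.d q).dualMap ∘ₗ (e hq).toLinearMap) :
    mgrade R M = r := by
  classical
  let E : ∀ m n : ℕ, m + n = r → ((C.F n) ≃ₗ[R] Module.Dual R (C.F m)) :=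
    fun m n h => @e m n h
  have sq : ∀ (q n : ℕ) (hp : (q + 1) + n = r) (hq : q + (n + 1) = r) (x : C.F (n+1)),
      E (q+1) n hp (C.d n x) = (C.d q).dualMap (E q (n+1) hq x) := by
    intro q n hp hq x
    have h := LinearMap.congr_fun (hsq q n hp hq) x
    simpa using h
  have extIso : ∀ n : ℕ, ExtMod R M R n ≅ C.Kc.homology n := fun n =>
    C.projRes.isoExt n (ModuleCat.of R R) ≪≫
      (HomologicalComplex.homologyFunctor _ _ n).mapIso C.KcIso
  have hSub : ∀ n, C.Kc.ExactAt n → Subsingleton (ExtMod R M R n) := by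
    intro n h
    have hz : Limits.IsZero (C.Kc.homology n) :=
      (HomologicalComplex.exactAt_iff_isZero_homology _ n).1 h
    exact subsingleton_of_isZero (hz.of_iso (extIso n))
  have hNon : ∀ n, ¬ C.Kc.ExactAt n → Nontrivial (ExtMod R M R n) := by
    intro n h
    rw [← not_subsingleton_iff_nontrivial]
    intro hs
    apply h
    rw [HomologicalComplex.exactAt_iff_isZero_homology]
    haveI := hs
    exact (ModuleCat.isZero_of_subsingleton _).of_iso (extIso n).symm
  have hex_gt : ∀ n, r < n → C.Kc.ExactAt n := by
    intro n hn
    rw [HomologicalComplex.exactAt_iff]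
    refine ShortComplex.exact_of_isZero_X₂ _ ?_
    haveI : Subsingleton ((C.Kc.sc n).X₂) := C.Kc_X_subsingleton (hvan n hn)
    exact ModuleCat.isZero_of_subsingleton _
  have hex_lt : ∀ n, n < r → C.Kc.ExactAt n := by
    intro n hn
    match n with
    | 0 =>
      rw [HomologicalComplex.exactAt_iff' _ 0 0 1 (by simp) (by simp),
        ShortComplex.moduleCat_exact_iff]
      intro φ hφ
      have hq0 : 0 + ((r-1)+1) = r := by omega
      have hp0 : (0+1) + (r-1) = r := by omega
      set x := (E 0 ((r-1)+1) hq0).symm φ with hxdef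
      have h2 : E 0 ((r-1)+1) hq0 x = φ := LinearEquiv.apply_symm_apply _ _
      have h3 : (C.d 0).dualMap φ = 0 := (C.Kc_d _ φ).symm.trans hφ
      have h1 := sq 0 (r-1) hp0 hq0 x
      rw [h2, h3] at h1
      have h4 : C.d (r-1) x = 0 := (LinearEquiv.map_eq_zero_iff _).1 h1
      obtain ⟨y, hy⟩ : x ∈ LinearMap.range (C.d ((r-1)+1)) := by
        rw [← C.exact (r-1)]; exact h4
      haveI := hvan ((r-1)+2) (by omega)
      have hy0 : y = 0 := Subsingleton.elim _ _
      have hx0 : x = 0 := by rw [← hy, hy0, map_zero]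
      have hφ0 : φ = 0 := by rw [← h2, hx0, map_zero]; rfl
      refine ⟨0, ?_⟩
      rw [map_zero]
      exact hφ0.symm
    | p+1 =>
      rw [HomologicalComplex.exactAt_iff' _ p (p+1) (p+2) (by simp) (by simp),
        ShortComplex.moduleCat_exact_iff]
      intro φ hφ
      obtain ⟨k, hpk⟩ : ∃ k, (p+2) + k = r := ⟨r - (p+2), by omega⟩
      have hq1 : (p+1) + (k+1) = r := by omega
      have hq2 : p + (k+2) = r := by omega
      set x := (E (p+1) (k+1) hq1).symm φ with hxdef
      have h2 : E (p+1) (k+1) hq1 x = φ := LinearEquiv.apply_symm_apply _ _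
      have h3 : (C.d (p+1)).dualMap φ = 0 := (C.Kc_d _ φ).symm.trans hφ
      have h1 := sq (p+1) k hpk hq1 x
      rw [h2, h3] at h1
      have h4 : C.d k x = 0 := (LinearEquiv.map_eq_zero_iff _).1 h1
      obtain ⟨y, hy⟩ : x ∈ LinearMap.range (C.d (k+1)) := by
        rw [← C.exact k]; exact h4
      have h5 := sq p (k+1) hq1 hq2 y
      rw [hy, h2] at h5
      refine ⟨E p (k+2) hq2 y, ?_⟩
      show C.Kc.d p (p+1) (E p (k+2) hq2 y) = φ
      rw [C.Kc_d]
      exact h5.symm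
  have hnotex : ¬ C.Kc.ExactAt r := by
    intro hex
    rcases Nat.eq_zero_or_pos r with h0 | hpos
    · subst h0
      rw [HomologicalComplex.exactAt_iff' _ 0 0 1 (by simp) (by simp),
        ShortComplex.moduleCat_exact_iff] at hex
      have hall : ∀ z : C.F 0, (E 0 0 rfl z : Module.Dual R (C.F 0)) = 0 := by
        intro z
        have hg : C.Kc.d 0 1 (E 0 0 rfl z) = 0 := by
          haveI : Subsingleton (C.Kc.X 1) := C.Kc_X_subsingleton (hvan 1 (by omega))
          exact Subsingleton.elim _ _
        obtain ⟨ψ, hψ⟩ := hex _ hg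
        have hψ' : C.Kc.d 0 0 ψ = E 0 0 rfl z := hψ
        rw [C.Kc.shape 0 0 (by simp)] at hψ'
        rw [← hψ']
        rfl
      obtain ⟨a, b, hab⟩ := hFr
      exact hab ((E 0 0 rfl).injective ((hall a).trans (hall b).symm))
    · obtain ⟨s, rfl⟩ : ∃ s, r = s + 1 := ⟨r - 1, by omega⟩
      rw [HomologicalComplex.exactAt_iff' _ s (s+1) (s+2) (by simp) (by simp),
        ShortComplex.moduleCat_exact_iff] at hex
      have h1 : (s+1) + 0 = s+1 := by omega
      have h2 : s + (0+1) = s+1 := by omega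
      have hsurj : Function.Surjective (C.d 0) := by
        intro x0
        have hg : C.Kc.d (s+1) (s+2) (E (s+1) 0 h1 x0) = 0 := by
          haveI : Subsingleton (C.Kc.X (s+2)) := C.Kc_X_subsingleton (hvan (s+2) (by omega))
          exact Subsingleton.elim _ _
        obtain ⟨ψ, hψ⟩ := hex _ hg
        have h5 := sq s 0 h1 h2 ((E s 1 h2).symm ψ)
        rw [show (E s (0+1) h2) ((E s 1 h2).symm ψ) = ψ from LinearEquiv.apply_symm_apply _ _] at h5
        have h6 : (C.d s).dualMap ψ = E (s+1) 0 h1 x0 := (C.Kc_d _ ψ).symm.trans hψ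
        rw [h6] at h5
        exact ⟨(E s 1 h2).symm ψ, (E (s+1) 0 h1).injective h5⟩
      have haug : ∀ z : C.F 0, C.aug z = 0 := by
        intro z
        have hz : z ∈ LinearMap.ker C.aug := by
          rw [C.exact_aug]
          exact hsurj z
        exact hz
      obtain ⟨a, b, hab⟩ := ‹Nontrivial M›
      obtain ⟨u, hu⟩ := C.aug_surj a
      obtain ⟨v, hv⟩ := C.aug_surj b
      exact hab (by rw [← hu, ← hv, haug, haug])
  have hset : {i | Nontrivial (ExtMod R M R i)} = {r} := by
    ext i
    simp only [Set.mem_setOf_eq, Set.mem_singleton_iff]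
    constructor
    · intro hi
      by_contra hir
      rcases Nat.lt_or_ge i r with h | h
      · exact absurd hi (not_nontrivial_iff_subsingleton.2 (hSub i (hex_lt i h)))
      · exact absurd hi (not_nontrivial_iff_subsingleton.2
          (hSub i (hex_gt i (lt_of_le_of_ne h (Ne.symm hir)))))
    · rintro rfl
      exact hNon _ hnotex
  show sInf {i | Nontrivial (ExtMod R M R i)} = r
  rw [hset]
  exact csInf_singleton r

end MinFreeRes

/-- If the minimal free resolution of a nonzero module `M` of grade `g` is self-dual,
then `(Ωⁱ M)* ≅ Ω^{g+1-i} M` for all `0 ≤ i ≤ g - 1`. -/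
theorem stmt_14 (R : Type) [CommRing R] [IsLocalRing R] [IsNoetherianRing R]
    (M : Type) [AddCommGroup M] [Module R M] [Module.Finite R M] [Nontrivial M]
    (g : ℕ) (hg : mgrade R M = g) (C : MinFreeRes R M) (hsd : C.SelfDual) :
    ∀ i : ℕ, i < g →
      Nonempty (Module.Dual R (C.Syz i) ≃ₗ[R] C.Syz (g + 1 - i)) := by
  obtain ⟨r, hvan, hFr, e, hsq⟩ := hsd
  obtain rfl : r = g := by
    rw [← hg]; exact (C.mgrade_eq_of_selfdual r hvan hFr e hsq).symm
  intro i hi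
  have hq : i + ((r - i - 1) + 1) = r := by omega
  have hp : (i + 1) + (r - i - 1) = r := by omega
  have hgoal : r + 1 - i = (r - i - 1) + 2 := by omega
  rw [hgoal]
  obtain ⟨E2⟩ := ker_equiv_of_square (@e i ((r - i - 1)+1) hq) (@e (i+1) (r - i - 1) hp)
    (C.d (r - i - 1)) ((C.d i).dualMap) (hsq i (r - i - 1) hp hq)
  have E3 : (LinearMap.ker (C.d (r - i - 1)) : Submodule R (C.F ((r - i - 1)+1))) ≃ₗ[R]
      LinearMap.range (C.d ((r - i - 1)+1)) := LinearEquiv.ofEq _ _ (C.exact (r - i - 1))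
  obtain ⟨E1⟩ : Nonempty (Module.Dual R (C.Syz i) ≃ₗ[R] LinearMap.ker (C.d i).dualMap) := by
    cases i with
    | zero => exact exists_dual_equiv (C.d 0) C.aug C.aug_surj C.exact_aug
    | succ j =>
      exact exists_dual_equiv (C.d (j+1)) (C.d j).rangeRestrict
        (LinearMap.surjective_rangeRestrict _)
        (by exact (LinearMap.ker_rangeRestrict _).trans (C.exact j))
  exact ⟨E1.trans (E2.trans E3)⟩
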